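/- There exists a unique α ∈ (0, 1/2) satisfying 1.5·h(α) = h(α) + 0.75·(1−α) (equivalently h(α) = 1.5·(1−α)), and it satisfies α < 0.36751; consequently 1.5·h(α) < 1.42312. -/

import Mathlib

/-!
In nats the equation reads `H(α) = (3/2)(1 - α) log 2`, where `H` is Mathlib's `Real.binEntropy`.
The difference of the two sides is strictly increasing on `[0, 1/2]`, since `H` is, so it has at
most one zero there. Truncating the Mercator series of `log (1 - x)` after 16 terms shows that the
difference changes sign between `0.367503` and `0.36751`, which locates the zero, and at the zero
`1.5 h(α) = 2.25 (1 - α) < 2.25 · 0.632497 < 1.42312`.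
-/

noncomputable def binEntropy (x : ℝ) : ℝ :=
  -x * Real.logb 2 x - (1 - x) * Real.logb 2 (1 - x)

namespace Real

open Finset

variable {x : ℝ}

lemma le_log_one_sub (n : ℕ) (hx₀ : 0 ≤ x) (hx₁ : x < 1) :
    -(∑ i ∈ range n, x ^ (i + 1) / (i + 1)) - x ^ (n + 1) / (1 - x) ≤ log (1 - x) := by
  have h := abs_log_sub_add_sum_range_le (by rwa [abs_of_nonneg hx₀]) n
  rw [abs_of_nonneg hx₀] at h
  linarith [(abs_le.1 h).1]

lemma log_one_sub_le (n : ℕ) (hx₀ : 0 ≤ x) (hx₁ : x < 1) :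
    log (1 - x) ≤ -(∑ i ∈ range n, x ^ (i + 1) / (i + 1)) + x ^ (n + 1) / (1 - x) := by
  have h := abs_log_sub_add_sum_range_le (by rwa [abs_of_nonneg hx₀]) n
  rw [abs_of_nonneg hx₀] at h
  linarith [(abs_le.1 h).2]

end Real

section

open Real

noncomputable def entropyGap (x : ℝ) : ℝ :=
  Real.binEntropy x - 3 / 2 * (1 - x) * log 2

lemma continuous_entropyGap : Continuous entropyGap := by
  unfold entropyGap
  fun_prop

lemma entropyGap_strictMonoOn : StrictMonoOn entropyGap (Set.Icc 0 (1 / 2)) := by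
  intro a ha b hb hab
  have hH := binEntropy_strictMonoOn (by simpa using ha) (by simpa using hb) hab
  have hlog2 : 0 < log 2 := log_pos one_lt_two
  unfold entropyGap
  nlinarith

lemma entropyGap_eq (x : ℝ) :
    entropyGap x = -x * log x - (1 - x) * log (1 - x) - 3 / 2 * (1 - x) * log 2 := by
  rw [entropyGap, Real.binEntropy, log_inv, log_inv]
  ring

/- The logarithm at `p` is reduced to the series at `1 - 2p` through `log p = log (2p) - log 2`,
which converges much faster than the series at `1 - p`. -/
lemma entropyGap_lower_neg : entropyGap 0.367503 < 0 := by
  have hlogp : log 0.367503 = log (1 - 0.264994) - log 2 := by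
    rw [← log_div (by norm_num) (by norm_num)]
    norm_num
  have hp : -0.3078767 ≤ log (1 - 0.264994) := by
    refine le_trans ?_ (le_log_one_sub 16 (by norm_num) (by norm_num))
    norm_num [Finset.sum_range_succ]
  have hq : -0.4580799 ≤ log (1 - 0.367503) := by
    refine le_trans ?_ (le_log_one_sub 16 (by norm_num) (by norm_num))
    norm_num [Finset.sum_range_succ]
  rw [entropyGap_eq, hlogp]
  linarith [log_two_gt_d9]

lemma entropyGap_upper_pos : 0 < entropyGap 0.36751 := by
  have hlogp : log 0.36751 = log (1 - 0.26498) - log 2 := by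
    rw [← log_div (by norm_num) (by norm_num)]
    norm_num
  have hp : log (1 - 0.26498) ≤ -0.3078575 := by
    refine le_trans (log_one_sub_le 16 (by norm_num) (by norm_num)) ?_
    norm_num [Finset.sum_range_succ]
  have hq : log (1 - 0.36751) ≤ -0.45809079 := by
    refine le_trans (log_one_sub_le 16 (by norm_num) (by norm_num)) ?_
    norm_num [Finset.sum_range_succ]
  rw [entropyGap_eq, hlogp]
  linarith [log_two_lt_d9]

lemma exists_entropyGap_eq_zero :
    ∃ α ∈ Set.Ioo (0.367503 : ℝ) 0.36751, entropyGap α = 0 :=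
  intermediate_value_Ioo (by norm_num) continuous_entropyGap.continuousOn
    ⟨entropyGap_lower_neg, entropyGap_upper_pos⟩

end

lemma binEntropy_eq_div_log_two (x : ℝ) : binEntropy x = Real.binEntropy x / Real.log 2 := by
  rw [binEntropy, Real.binEntropy, Real.logb, Real.logb, Real.log_inv, Real.log_inv]
  ring

lemma equation_iff_entropyGap_eq_zero (β : ℝ) :
    1.5 * binEntropy β = binEntropy β + 0.75 * (1 - β) ↔ entropyGap β = 0 := by
  have hlog2 : Real.log 2 ≠ 0 := (Real.log_pos one_lt_two).ne'
  rw [binEntropy_eq_div_log_two, entropyGap]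
  constructor <;> intro h
  · field_simp at h
    linarith
  · field_simp
    linarith

theorem stmt_19 :
    ∃ α : ℝ, (α ∈ Set.Ioo (0 : ℝ) (1 / 2) ∧
        1.5 * binEntropy α = binEntropy α + 0.75 * (1 - α)) ∧
      (∀ β : ℝ, β ∈ Set.Ioo (0 : ℝ) (1 / 2) →
        1.5 * binEntropy β = binEntropy β + 0.75 * (1 - β) → β = α) ∧
      α < 0.36751 ∧ 1.5 * binEntropy α < 1.42312 := by
  obtain ⟨α, ⟨hα₀, hα₁⟩, hgap⟩ := exists_entropyGap_eq_zero
  have hα : α ∈ Set.Ioo (0 : ℝ) (1 / 2) := ⟨by linarith, by linarith⟩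
  have heq := (equation_iff_entropyGap_eq_zero α).2 hgap
  refine ⟨α, ⟨hα, heq⟩, fun β hβ hβeq => ?_, hα₁, by linarith⟩
  exact entropyGap_strictMonoOn.injOn (Set.Ioo_subset_Icc_self hβ)
    (Set.Ioo_subset_Icc_self hα) (by rw [(equation_iff_entropyGap_eq_zero β).1 hβeq, hgap])
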